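/- arXiv:1101.1452 — 6 statements merged into one kernel-verified Lean document; each statement's English description precedes it below -/
import Mathlib

section
/- Let T ⊂ R^2 be a nondegenerate triangle and f a convex function on T. Let e be an edge of T with endpoints z₀ and z₁, and let T¹, T² be the two triangles obtained by bisecting T from the midpoint of e to the opposite vertex. Then the decrease in L¹ interpolation error satisfies ‖f − I_T f‖_{L¹(T)} − (‖f − I_{T¹} f‖_{L¹(T¹)} + ‖f − I_{T²} f‖_{L¹(T²)}) = (|T|/3)·( (f(z₀)+f(z₁))/2 − f((z₀+z₁)/2) ). -/
/-! For convex `f` the interpolant lies above `f`, so the `L¹` error on a triangle `S` is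
`∫_S I_S f - ∫_S f`. The integral of an affine function over `S` is `|S|` times the mean of its
vertex values (change of variables to the unit triangle, then Fubini). The two halves of `T` have
area `|T|/2` and tile `T` up to a null segment, so in the decrease the integrals of `f` cancel and
only the vertex values survive. -/

open MeasureTheory

/-- The 2D cross product / determinant of two vectors of `ℝ × ℝ`. -/
noncomputable def det2 (u v : ℝ × ℝ) : ℝ := u.1 * v.2 - u.2 * v.1

/-- The area of the triangle with vertices `p0, p1, p2`. -/
noncomputable def triArea (p0 p1 p2 : ℝ × ℝ) : ℝ := |det2 (p1 - p0) (p2 - p0)| / 2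

/-- The (closed) triangle with vertices `p0, p1, p2`. -/
def tri (p0 p1 p2 : ℝ × ℝ) : Set (ℝ × ℝ) := convexHull ℝ {p0, p1, p2}

/-- The affine interpolation of `f` at the vertices `p0, p1, p2`, written with
barycentric coordinates; for affinely independent vertices it is the unique
affine function agreeing with `f` at the three vertices. -/
noncomputable def interp (p0 p1 p2 : ℝ × ℝ) (f : ℝ × ℝ → ℝ) (x : ℝ × ℝ) : ℝ :=
  (det2 (p1 - x) (p2 - x) * f p0 + det2 (p2 - x) (p0 - x) * f p1 +
    det2 (p0 - x) (p1 - x) * f p2) / det2 (p1 - p0) (p2 - p0)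

/-- The `L¹` interpolation error `‖f − I_T f‖_{L¹(T)}` on the triangle `T` with
vertices `p0, p1, p2`. -/
noncomputable def interpErr (p0 p1 p2 : ℝ × ℝ) (f : ℝ × ℝ → ℝ) : ℝ :=
  ∫ x in tri p0 p1 p2, |f x - interp p0 p1 p2 f x|

/-- The decrease `D_T(e,f)` of the `L¹` interpolation error when the triangle
with vertices `z0, z1, z2` is bisected from the midpoint of the edge `e = [z0,z1]`
to the opposite vertex `z2`. -/
noncomputable def Ddec (z0 z1 z2 : ℝ × ℝ) (f : ℝ × ℝ → ℝ) : ℝ :=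
  interpErr z0 z1 z2 f - interpErr z0 (midpoint ℝ z0 z1) z2 f -
    interpErr (midpoint ℝ z0 z1) z1 z2 f

open Set

lemma mem_tri_iff {p0 p1 p2 x : ℝ × ℝ} :
    x ∈ tri p0 p1 p2 ↔ ∃ a b c : ℝ, 0 ≤ a ∧ 0 ≤ b ∧ 0 ≤ c ∧ a + b + c = 1 ∧
      x = a • p0 + b • p1 + c • p2 := by
  constructor
  · intro hx
    rw [tri, convexHull_insert ⟨p1, mem_insert _ _⟩, convexHull_pair, mem_convexJoin] at hx
    obtain ⟨_, rfl, _, ⟨s, t, hs, ht, hst, rfl⟩, a, d, ha, hd, had, rfl⟩ := hx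
    refine ⟨a, d * s, d * t, ha, mul_nonneg hd hs, mul_nonneg hd ht,
      by linear_combination had + d * hst, ?_⟩
    simp only [smul_add, smul_smul, add_assoc]
  · rintro ⟨a, b, c, ha, hb, hc, habc, rfl⟩
    have h := (convex_convexHull ℝ ({p0, p1, p2} : Set (ℝ × ℝ))).sum_mem
      (t := Finset.univ) (w := ![a, b, c]) (z := ![p0, p1, p2])
      (by simp [Fin.forall_fin_succ, ha, hb, hc]) (by simp [Fin.sum_univ_three, habc])
      (by simp [Fin.forall_fin_succ, subset_convexHull ℝ _ _])
    simpa [tri, Fin.sum_univ_three] using h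

lemma interp_smul_add_smul_add_smul {p0 p1 p2 : ℝ × ℝ} (hD : det2 (p1 - p0) (p2 - p0) ≠ 0)
    (f : ℝ × ℝ → ℝ) {a b c : ℝ} (h : a + b + c = 1) :
    interp p0 p1 p2 f (a • p0 + b • p1 + c • p2) = a * f p0 + b * f p1 + c * f p2 := by
  obtain rfl : c = 1 - a - b := by linarith
  rw [interp, div_eq_iff hD]
  simp only [det2, Prod.fst_add, Prod.snd_add, Prod.fst_sub, Prod.snd_sub, Prod.smul_fst,
    Prod.smul_snd, smul_eq_mul]
  ring

lemma le_interp_of_convexOn {p0 p1 p2 : ℝ × ℝ} (hD : det2 (p1 - p0) (p2 - p0) ≠ 0)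
    {f : ℝ × ℝ → ℝ} (hf : ConvexOn ℝ (tri p0 p1 p2) f) {x : ℝ × ℝ}
    (hx : x ∈ tri p0 p1 p2) :
    f x ≤ interp p0 p1 p2 f x := by
  obtain ⟨a, b, c, ha, hb, hc, habc, rfl⟩ := mem_tri_iff.1 hx
  have h := hf.map_sum_le (t := Finset.univ) (w := ![a, b, c]) (p := ![p0, p1, p2])
    (by simp [Fin.forall_fin_succ, ha, hb, hc]) (by simp [Fin.sum_univ_three, habc])
    (by simp [Fin.forall_fin_succ, tri, subset_convexHull ℝ _ _])
  simpa [Fin.sum_univ_three, interp_smul_add_smul_add_smul hD f habc] using h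

lemma continuous_interp (p0 p1 p2 : ℝ × ℝ) (f : ℝ × ℝ → ℝ) :
    Continuous (interp p0 p1 p2 f) := by
  unfold interp det2
  fun_prop

noncomputable def columnsCLM (u v : ℝ × ℝ) : (ℝ × ℝ) →L[ℝ] ℝ × ℝ :=
  (ContinuousLinearMap.fst ℝ ℝ ℝ).smulRight u +
    (ContinuousLinearMap.snd ℝ ℝ ℝ).smulRight v

@[simp]
lemma columnsCLM_apply (u v p : ℝ × ℝ) : columnsCLM u v p = p.1 • u + p.2 • v := rfl

lemma det_columnsCLM (u v : ℝ × ℝ) : (columnsCLM u v).det = det2 u v := by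
  rw [ContinuousLinearMap.det, ← LinearMap.det_toMatrix (Module.Basis.finTwoProd ℝ),
    Matrix.det_fin_two]
  simp [LinearMap.toMatrix_apply, det2, mul_comm]

lemma injective_columnsCLM_iff (u v : ℝ × ℝ) :
    Function.Injective (columnsCLM u v) ↔ det2 u v ≠ 0 := by
  rw [← det_columnsCLM, ← isUnit_iff_ne_zero, ContinuousLinearMap.det,
    ← LinearMap.isUnit_iff_isUnit_det, LinearMap.isUnit_iff_ker_eq_bot, LinearMap.ker_eq_bot]
  rfl

lemma det2_sub_ne_zero_of_affineIndependent {z0 z1 z2 : ℝ × ℝ}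
    (hT : AffineIndependent ℝ ![z0, z1, z2]) : det2 (z1 - z0) (z2 - z0) ≠ 0 := by
  rw [← injective_columnsCLM_iff, injective_iff_map_eq_zero]
  intro p hp
  have hrel : -(p.1 + p.2) • z0 + p.1 • z1 + p.2 • z2 = 0 := by
    rw [← hp, columnsCLM_apply]
    module
  have h := hT.eq_zero_of_sum_eq_zero (s := Finset.univ) (w := ![-(p.1 + p.2), p.1, p.2])
    (by simp [Fin.sum_univ_three]) (by simpa [Fin.sum_univ_three] using hrel)
  exact Prod.ext (by simpa using h 1) (by simpa using h 2)

lemma isCompact_tri (p0 p1 p2 : ℝ × ℝ) : IsCompact (tri p0 p1 p2) :=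
  (toFinite {p0, p1, p2}).isCompact_convexHull ℝ

def unitTriangle : Set (ℝ × ℝ) := {p | 0 ≤ p.1 ∧ 0 ≤ p.2 ∧ p.1 + p.2 ≤ 1}

lemma measurableSet_unitTriangle : MeasurableSet unitTriangle := by
  unfold unitTriangle; measurability

lemma tri_eq_image_unitTriangle (p0 p1 p2 : ℝ × ℝ) :
    tri p0 p1 p2 = (fun p => p0 + columnsCLM (p1 - p0) (p2 - p0) p) '' unitTriangle := by
  ext x
  simp only [mem_tri_iff, mem_image, unitTriangle, mem_ofPred_eq, columnsCLM_apply, Prod.exists]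
  constructor
  · rintro ⟨a, b, c, ha, hb, hc, habc, rfl⟩
    obtain rfl : a = 1 - b - c := by linarith
    exact ⟨b, c, ⟨hb, hc, by linarith⟩, by module⟩
  · rintro ⟨b, c, ⟨hb, hc, hbc⟩, rfl⟩
    exact ⟨1 - b - c, b, c, by linarith, hb, hc, by ring, by module⟩

lemma setIntegral_tri_eq_unitTriangle {p0 p1 p2 : ℝ × ℝ} (hD : det2 (p1 - p0) (p2 - p0) ≠ 0)
    (g : ℝ × ℝ → ℝ) :
    ∫ x in tri p0 p1 p2, g x =
      |det2 (p1 - p0) (p2 - p0)| *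
        ∫ p in unitTriangle, g (p0 + columnsCLM (p1 - p0) (p2 - p0) p) := by
  set L := columnsCLM (p1 - p0) (p2 - p0)
  have hL : ∀ p ∈ unitTriangle, HasFDerivWithinAt (fun p => p0 + L p) L unitTriangle p :=
    fun p _ => (L.hasFDerivAt.const_add p0).hasFDerivWithinAt
  have hinj : InjOn (fun p => p0 + L p) unitTriangle :=
    fun p _ q _ h => (injective_columnsCLM_iff _ _).2 hD (add_left_cancel h)
  rw [tri_eq_image_unitTriangle, integral_image_eq_integral_abs_det_fderiv_smul volume
    measurableSet_unitTriangle hL hinj, det_columnsCLM]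
  simp only [smul_eq_mul, integral_const_mul]

lemma setIntegral_unitTriangle_eq_iterated {g : ℝ × ℝ → ℝ}
    (hg : IntegrableOn g unitTriangle) :
    ∫ p in unitTriangle, g p = ∫ x in (0:ℝ)..1, ∫ y in (0:ℝ)..(1 - x), g (x, y) := by
  have slice (x y : ℝ) : unitTriangle.indicator g (x, y) =
      (Icc 0 1).indicator (fun x => (Icc 0 (1 - x)).indicator (fun y => g (x, y)) y) x := by
    simp only [indicator_apply, unitTriangle, mem_Icc, mem_ofPred_eq]
    split_ifs <;> first | rfl | (exfalso; grind)
  have fiber (x : ℝ) : ∫ y, unitTriangle.indicator g (x, y) =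
      (Icc 0 1).indicator (fun x => ∫ y in Icc 0 (1 - x), g (x, y)) x := by
    by_cases hx : x ∈ Icc (0:ℝ) 1 <;>
      simp [slice, hx, integral_indicator measurableSet_Icc]
  have hint := (integrable_indicator_iff measurableSet_unitTriangle).2 hg
  rw [← integral_indicator measurableSet_unitTriangle, Measure.volume_eq_prod,
    integral_prod _ (by rwa [Measure.volume_eq_prod] at hint)]
  simp only [fiber]
  rw [integral_indicator measurableSet_Icc, integral_Icc_eq_integral_Ioc,
    ← intervalIntegral.integral_of_le zero_le_one]
  refine intervalIntegral.integral_congr fun x hx => ?_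
  rw [uIcc_of_le zero_le_one] at hx
  rw [integral_Icc_eq_integral_Ioc, ← intervalIntegral.integral_of_le (by linarith [hx.2])]

lemma integral_add_mul_add_mul_sq (a b c s : ℝ) :
    ∫ y in (0:ℝ)..s, (a + b * y + c * y ^ 2) = a * s + b * s ^ 2 / 2 + c * s ^ 3 / 3 := by
  rw [intervalIntegral.integral_add, intervalIntegral.integral_add,
    intervalIntegral.integral_const_mul, intervalIntegral.integral_const_mul] <;>
  first
  | simp only [intervalIntegral.integral_const, integral_id, integral_pow, smul_eq_mul]; ring
  | exact (by fun_prop : Continuous _).intervalIntegrable _ _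

lemma setIntegral_unitTriangle_affine (α β γ : ℝ) :
    ∫ p in unitTriangle, (α + β * p.1 + γ * p.2) = α / 2 + β / 6 + γ / 6 := by
  have hsub : unitTriangle ⊆ Icc 0 1 := fun p ⟨h1, h2, h12⟩ =>
    ⟨⟨h1, h2⟩, show p.1 ≤ 1 ∧ p.2 ≤ 1 from ⟨by linarith, by linarith⟩⟩
  have hcont : Continuous fun p : ℝ × ℝ => α + β * p.1 + γ * p.2 := by fun_prop
  have hint : IntegrableOn (fun p : ℝ × ℝ => α + β * p.1 + γ * p.2) unitTriangle :=
    hcont.integrableOn_Icc.mono_set hsub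
  have inner (x : ℝ) : ∫ y in (0:ℝ)..(1 - x), (α + β * x + γ * y) =
      (α + γ / 2) + (β - α - γ) * x + (γ / 2 - β) * x ^ 2 := by
    have h := integral_add_mul_add_mul_sq (α + β * x) γ 0 (1 - x)
    simp only [zero_mul, add_zero] at h
    rw [h]; ring
  rw [setIntegral_unitTriangle_eq_iterated hint]
  simp_rw [inner, integral_add_mul_add_mul_sq]
  ring

lemma setIntegral_tri_interp {p0 p1 p2 : ℝ × ℝ} (hD : det2 (p1 - p0) (p2 - p0) ≠ 0)
    (f : ℝ × ℝ → ℝ) :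
    ∫ x in tri p0 p1 p2, interp p0 p1 p2 f x =
      triArea p0 p1 p2 * ((f p0 + f p1 + f p2) / 3) := by
  have affine (p : ℝ × ℝ) : interp p0 p1 p2 f (p0 + columnsCLM (p1 - p0) (p2 - p0) p) =
      f p0 + (f p1 - f p0) * p.1 + (f p2 - f p0) * p.2 := by
    have hp : p0 + columnsCLM (p1 - p0) (p2 - p0) p =
        (1 - p.1 - p.2) • p0 + p.1 • p1 + p.2 • p2 := by
      rw [columnsCLM_apply]
      module
    rw [hp, interp_smul_add_smul_add_smul hD f (by ring)]
    ring
  simp_rw [setIntegral_tri_eq_unitTriangle hD, affine, setIntegral_unitTriangle_affine, triArea]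
  ring

lemma interpErr_eq_of_convexOn {p0 p1 p2 : ℝ × ℝ} (hD : det2 (p1 - p0) (p2 - p0) ≠ 0)
    {f : ℝ × ℝ → ℝ} (hconv : ConvexOn ℝ (tri p0 p1 p2) f)
    (hcont : ContinuousOn f (tri p0 p1 p2)) :
    interpErr p0 p1 p2 f =
      triArea p0 p1 p2 * ((f p0 + f p1 + f p2) / 3) - ∫ x in tri p0 p1 p2, f x := by
  have habs : EqOn (fun x => |f x - interp p0 p1 p2 f x|) (fun x => interp p0 p1 p2 f x - f x)
      (tri p0 p1 p2) := fun x hx => by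
    dsimp only
    rw [abs_sub_comm, abs_of_nonneg (sub_nonneg.2 (le_interp_of_convexOn hD hconv hx))]
  have hK := isCompact_tri p0 p1 p2
  rw [interpErr, setIntegral_congr_fun hK.measurableSet habs,
    integral_sub ((continuous_interp p0 p1 p2 f).continuousOn.integrableOn_compact hK)
      (hcont.integrableOn_compact hK), setIntegral_tri_interp hD]

lemma volume_setOf_det2_sub_eq_zero (m : ℝ × ℝ) {v : ℝ × ℝ} (hv : v ≠ 0) :
    volume {x | det2 (x - m) v = 0} = 0 := by
  let ψ : (ℝ × ℝ) →ₗ[ℝ] ℝ := v.2 • LinearMap.fst ℝ ℝ ℝ - v.1 • LinearMap.snd ℝ ℝ ℝ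
  have hline : {x | det2 (x - m) v = 0} = (AffineSubspace.mk' m (LinearMap.ker ψ) : Set _) := by
    ext x
    simp only [mem_ofPred_eq, SetLike.mem_coe, AffineSubspace.mem_mk', LinearMap.mem_ker, ψ, det2,
      vsub_eq_sub, LinearMap.sub_apply, LinearMap.smul_apply, LinearMap.fst_apply,
      LinearMap.snd_apply, smul_eq_mul]
    ring_nf
  rw [hline]
  refine Measure.addHaar_affineSubspace _ _ fun htop => hv ?_
  have hψ : ψ = 0 := by
    rw [← LinearMap.ker_eq_top, ← AffineSubspace.direction_mk' m (LinearMap.ker ψ), htop,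
      AffineSubspace.direction_top]
  ext
  · simpa [ψ] using LinearMap.congr_fun hψ (0, 1)
  · simpa [ψ] using LinearMap.congr_fun hψ (1, 0)

section Bisection

variable (z0 z1 z2 : ℝ × ℝ)

local notation "m" => midpoint ℝ z0 z1

lemma det2_midpoint_sub_left : det2 (m - z0) (z2 - z0) = det2 (z1 - z0) (z2 - z0) / 2 := by
  simp only [det2, midpoint_eq_smul_add, invOf_eq_inv, Prod.fst_add, Prod.snd_add, Prod.fst_sub,
    Prod.snd_sub, Prod.smul_fst, Prod.smul_snd, smul_eq_mul]
  ring

lemma det2_sub_midpoint_right : det2 (z1 - m) (z2 - m) = det2 (z1 - z0) (z2 - z0) / 2 := by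
  simp only [det2, midpoint_eq_smul_add, invOf_eq_inv, Prod.fst_add, Prod.snd_add, Prod.fst_sub,
    Prod.snd_sub, Prod.smul_fst, Prod.smul_snd, smul_eq_mul]
  ring

lemma tri_eq_union_bisect : tri z0 z1 z2 = tri z0 m z2 ∪ tri m z1 z2 := by
  ext x
  simp only [mem_union, mem_tri_iff, midpoint_eq_smul_add, invOf_eq_inv]
  constructor
  · rintro ⟨a, b, c, ha, hb, hc, habc, rfl⟩
    rcases le_total b a with hba | hab
    · exact Or.inl ⟨a - b, 2 * b, c, by linarith, by linarith, hc, by linarith, by module⟩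
    · exact Or.inr ⟨2 * a, b - a, c, by linarith, by linarith, hc, by linarith, by module⟩
  · rintro (⟨a, b, c, ha, hb, hc, habc, rfl⟩ | ⟨a, b, c, ha, hb, hc, habc, rfl⟩)
    · exact ⟨a + b / 2, b / 2, c, by positivity, by positivity, hc, by linarith, by module⟩
    · exact ⟨a / 2, a / 2 + b, c, by positivity, by positivity, hc, by linarith, by module⟩

/-- The median through `m` and `z2` separates the halves: on the left `det2 (x - m) (z2 - m)` is
a nonpositive, on the right a nonnegative multiple of `det2 (z1 - z0) (z2 - z0) / 2`. -/
lemma volume_tri_inter_bisect (hD : det2 (z1 - z0) (z2 - z0) ≠ 0) :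
    volume (tri z0 m z2 ∩ tri m z1 z2) = 0 := by
  have hD' : det2 (z1 - z0) (z2 - z0) / 2 ≠ 0 := div_ne_zero hD two_ne_zero
  have hv : z2 - m ≠ 0 := fun h => by
    simpa [h, det2] using (det2_sub_midpoint_right z0 z1 z2).trans_ne hD'
  refine measure_mono_null (fun x ⟨hx1, hx2⟩ => ?_) (volume_setOf_det2_sub_eq_zero m hv)
  obtain ⟨a, b, c, ha, -, -, habc, hx⟩ := mem_tri_iff.1 hx1
  obtain ⟨a', b', c', -, hb', -, habc', hx'⟩ := mem_tri_iff.1 hx2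
  obtain rfl : c = 1 - a - b := by linarith
  obtain rfl : c' = 1 - a' - b' := by linarith
  have hleft : det2 (x - m) (z2 - m) = -(a * (det2 (z1 - z0) (z2 - z0) / 2)) := by
    simp only [hx, det2, midpoint_eq_smul_add, invOf_eq_inv, Prod.fst_add, Prod.snd_add,
      Prod.fst_sub, Prod.snd_sub, Prod.smul_fst, Prod.smul_snd, smul_eq_mul]
    ring
  have hright : det2 (x - m) (z2 - m) = b' * (det2 (z1 - z0) (z2 - z0) / 2) := by
    simp only [hx', det2, midpoint_eq_smul_add, invOf_eq_inv, Prod.fst_add, Prod.snd_add,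
      Prod.fst_sub, Prod.snd_sub, Prod.smul_fst, Prod.smul_snd, smul_eq_mul]
    ring
  have hsum : a + b' = 0 :=
    (mul_eq_zero.1 (by linarith : (a + b') * (det2 (z1 - z0) (z2 - z0) / 2) = 0)).resolve_right hD'
  show det2 (x - m) (z2 - m) = 0
  rw [hleft, show a = 0 by linarith, zero_mul, neg_zero]

lemma triArea_bisect_left : triArea z0 m z2 = triArea z0 z1 z2 / 2 := by
  rw [triArea, triArea, det2_midpoint_sub_left, abs_div, abs_two]

lemma triArea_bisect_right : triArea m z1 z2 = triArea z0 z1 z2 / 2 := by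
  rw [triArea, triArea, det2_sub_midpoint_right, abs_div, abs_two]

lemma setIntegral_tri_eq_add_bisect (hD : det2 (z1 - z0) (z2 - z0) ≠ 0) {f : ℝ × ℝ → ℝ}
    (hf : IntegrableOn f (tri z0 z1 z2)) :
    ∫ x in tri z0 z1 z2, f x = (∫ x in tri z0 m z2, f x) + ∫ x in tri m z1 z2, f x := by
  rw [tri_eq_union_bisect] at hf ⊢
  exact setIntegral_union₀ (volume_tri_inter_bisect z0 z1 z2 hD)
    (isCompact_tri _ _ _).measurableSet.nullMeasurableSet hf.left_of_union hf.right_of_union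

end Bisection

/-- for a convex function `f` on a nondegenerate triangle `T` with
vertices `z0, z1, z2`, bisecting the edge `[z0,z1]` at its midpoint decreases the
`L¹` interpolation error by `(|T|/3)·((f(z0)+f(z1))/2 − f((z0+z1)/2))`. -/
theorem stmt4 (z0 z1 z2 : ℝ × ℝ) (hT : AffineIndependent ℝ ![z0, z1, z2])
    (f : ℝ × ℝ → ℝ) (hconv : ConvexOn ℝ (tri z0 z1 z2) f)
    (hcont : ContinuousOn f (tri z0 z1 z2)) :
    Ddec z0 z1 z2 f =
      triArea z0 z1 z2 / 3 * ((f z0 + f z1) / 2 - f (midpoint ℝ z0 z1)) := by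
  have hD := det2_sub_ne_zero_of_affineIndependent hT
  have hD1 : det2 (midpoint ℝ z0 z1 - z0) (z2 - z0) ≠ 0 := by
    rw [det2_midpoint_sub_left]; exact div_ne_zero hD two_ne_zero
  have hD2 : det2 (z1 - midpoint ℝ z0 z1) (z2 - midpoint ℝ z0 z1) ≠ 0 := by
    rw [det2_sub_midpoint_right]; exact div_ne_zero hD two_ne_zero
  have hsub1 : tri z0 (midpoint ℝ z0 z1) z2 ⊆ tri z0 z1 z2 :=
    (tri_eq_union_bisect z0 z1 z2).symm ▸ subset_union_left
  have hsub2 : tri (midpoint ℝ z0 z1) z1 z2 ⊆ tri z0 z1 z2 :=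
    (tri_eq_union_bisect z0 z1 z2).symm ▸ subset_union_right
  rw [Ddec, interpErr_eq_of_convexOn hD hconv hcont,
    interpErr_eq_of_convexOn hD1 (hconv.subset hsub1 (convex_convexHull ℝ _)) (hcont.mono hsub1),
    interpErr_eq_of_convexOn hD2 (hconv.subset hsub2 (convex_convexHull ℝ _)) (hcont.mono hsub2),
    setIntegral_tri_eq_add_bisect z0 z1 z2 hD (hcont.integrableOn_compact (isCompact_tri _ _ _)),
    triArea_bisect_left, triArea_bisect_right]
  ring
end

section
/- Let q be a convex quadratic function on R^2 with homogeneous quadratic part q̂, and let T be a triangle with an edge e. Then the L¹ interpolation error decrease from bisecting e satisfies D_T(e,q) = (|T|/12)·q̂(e). Consequently, an edge e of T maximizes D_T(·,q) among the three edges if and only if it maximizes q̂(e), i.e. if and only if it is longest in the q-metric |v|_q := √(q̂(v)). -/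
/-!
Map `T` affinely onto the reference triangle. In barycentric coordinates `λ` the pointwise
interpolation error of `q` is `∑_{i<j} λᵢ λⱼ q̂(zᵢ - zⱼ)`: the affine part of `q` is
interpolated exactly, and this sum is nonnegative because `q̂` is, so the absolute value in
the `L¹` error disappears. As `∫_T λᵢ λⱼ = |T|/12`, the error on `T` is `|T|/12` times the sum
of `q̂` over the three edges. The two halves of `T` have area `|T|/2` and share the median
from the midpoint `m` of `e`, and the parallelogram law
`q̂(z₂ - z₀) + q̂(z₂ - z₁) = 2 q̂(z₂ - m) + q̂(z₁ - z₀)/2` leaves the decrease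
`|T|/12 · q̂(z₁ - z₀)`. The factor `|T|/12` is the same positive number for all three edges.
-/

open MeasureTheory

open Set

def stdTri : Set (ℝ × ℝ) := {p | 0 ≤ p.1 ∧ 0 ≤ p.2 ∧ p.1 + p.2 ≤ 1}

lemma mem_stdTri {p : ℝ × ℝ} : p ∈ stdTri ↔ p.1 ∈ Icc 0 1 ∧ p.2 ∈ Icc 0 (1 - p.1) := by
  simp only [stdTri, mem_ofPred, mem_Icc]
  grind

lemma measurableSet_stdTri : MeasurableSet stdTri :=
  (measurableSet_le measurable_const measurable_fst).inter
    ((measurableSet_le measurable_const measurable_snd).inter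
      (measurableSet_le (measurable_fst.add measurable_snd) measurable_const))

lemma convex_stdTri : Convex ℝ stdTri := by
  rintro x ⟨hx1, hx2, hx3⟩ y ⟨hy1, hy2, hy3⟩ a b ha hb hab
  simp only [stdTri, mem_ofPred, Prod.fst_add, Prod.snd_add, Prod.smul_fst, Prod.smul_snd,
    smul_eq_mul]
  refine ⟨by positivity, by positivity, ?_⟩
  nlinarith

lemma tri_unit_eq_stdTri : tri (0, 0) (1, 0) (0, 1) = stdTri := by
  refine (convexHull_min ?_ convex_stdTri).antisymm ?_
  · rintro p (rfl | rfl | rfl) <;> norm_num [stdTri]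
  · rintro ⟨s, t⟩ ⟨hs, ht, hst⟩
    have hvert :
        ∀ i, ![((0 : ℝ), (0 : ℝ)), (1, 0), (0, 1)] i ∈ tri (0, 0) (1, 0) (0, 1) :=
      fun i => subset_convexHull ℝ _ (by fin_cases i <;> simp)
    convert (convex_convexHull ℝ _).sum_mem (t := Finset.univ) (w := ![1 - s - t, s, t])
      (fun i _ => by fin_cases i <;> simp <;> linarith) (by simp [Fin.sum_univ_three]; ring)
      (fun i _ => hvert i) using 1
    simp [Fin.sum_univ_three]

lemma isCompact_stdTri : IsCompact stdTri :=
  tri_unit_eq_stdTri ▸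
    (toFinite {((0 : ℝ), (0 : ℝ)), (1, 0), (0, 1)}).isCompact_convexHull ℝ

lemma indicator_stdTri (F : ℝ × ℝ → ℝ) (p : ℝ × ℝ) :
    stdTri.indicator F p =
      (Icc 0 1).indicator (fun s => (Icc 0 (1 - s)).indicator (fun t => F (s, t)) p.2) p.1 := by
  by_cases h : p ∈ stdTri
  · obtain ⟨h1, h2⟩ := mem_stdTri.1 h
    simp only [indicator_of_mem h, indicator_of_mem h1, indicator_of_mem h2]
  · rw [indicator_of_notMem h]
    rw [mem_stdTri, not_and_or] at h
    rcases h with h | h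
    · exact (indicator_of_notMem h _).symm
    · refine (indicator_apply_eq_zero.2 fun _ => ?_).symm
      exact indicator_of_notMem h _

lemma setIntegral_stdTri {F : ℝ × ℝ → ℝ} (hF : Continuous F) :
    ∫ p in stdTri, F p = ∫ s in (0 : ℝ)..1, ∫ t in (0 : ℝ)..(1 - s), F (s, t) := by
  have hint : Integrable (stdTri.indicator F) (volume.prod volume) :=
    (hF.continuousOn.integrableOn_compact isCompact_stdTri).integrable_indicator
      measurableSet_stdTri
  rw [← integral_indicator measurableSet_stdTri, Measure.volume_eq_prod, integral_prod _ hint,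
    intervalIntegral.integral_of_le zero_le_one, ← integral_Icc_eq_integral_Ioc,
    ← integral_indicator measurableSet_Icc]
  congr 1 with s
  simp only [indicator_stdTri]
  by_cases hs : s ∈ Icc (0 : ℝ) 1
  · simp only [indicator_of_mem hs]
    rw [integral_indicator measurableSet_Icc,
      intervalIntegral.integral_of_le (by linarith [hs.2]), integral_Icc_eq_integral_Ioc]
  · simp [indicator_of_notMem hs]

lemma integral_cubic (c₀ c₁ c₂ c₃ b : ℝ) :
    ∫ x in (0 : ℝ)..b, (c₀ + c₁ * x + c₂ * x ^ 2 + c₃ * x ^ 3) =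
      c₀ * b + c₁ * b ^ 2 / 2 + c₂ * b ^ 3 / 3 + c₃ * b ^ 4 / 4 := by
  rw [intervalIntegral.integral_add, intervalIntegral.integral_add,
    intervalIntegral.integral_add, intervalIntegral.integral_const_mul,
    intervalIntegral.integral_const_mul, intervalIntegral.integral_const_mul, integral_id,
    integral_pow, integral_pow, intervalIntegral.integral_const]
  · simp only [smul_eq_mul]
    ring
  all_goals exact (by fun_prop : Continuous _).intervalIntegrable _ _

lemma setIntegral_stdTri_edgeBubbles (A B C : ℝ) :
    ∫ p in stdTri,
        (A * (p.1 * (1 - p.1 - p.2)) + B * (p.2 * (1 - p.1 - p.2)) + C * (p.1 * p.2)) =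
      (A + B + C) / 24 := by
  have hinner : ∀ s : ℝ, ∫ t in (0 : ℝ)..(1 - s),
      (A * (s * (1 - s - t)) + B * (t * (1 - s - t)) + C * (s * t)) =
        B / 6 + (A / 2 - B / 2 + C / 2) * s + (-A + B / 2 - C) * s ^ 2 +
          (A / 2 - B / 6 + C / 2) * s ^ 3 := fun s => by
    convert integral_cubic (A * s * (1 - s)) (B * (1 - s) - A * s + C * s) (-B) 0 (1 - s)
      using 1
    · congr 1 with t
      ring
    · ring
  rw [setIntegral_stdTri (by fun_prop)]
  simp only [hinner]
  rw [integral_cubic]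
  ring

def linComb (u v : ℝ × ℝ) : ℝ × ℝ →L[ℝ] ℝ × ℝ :=
  (ContinuousLinearMap.fst ℝ ℝ ℝ).smulRight u + (ContinuousLinearMap.snd ℝ ℝ ℝ).smulRight v

@[simp]
lemma linComb_apply (u v p : ℝ × ℝ) : linComb u v p = p.1 • u + p.2 • v := rfl

lemma det_linComb (u v : ℝ × ℝ) : (linComb u v).det = det2 u v := by
  rw [ContinuousLinearMap.det, ← LinearMap.det_toMatrix (Module.Basis.finTwoProd ℝ),
    Matrix.det_fin_two]
  simp [LinearMap.toMatrix_apply, det2]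
  ring

lemma linComb_injective {u v : ℝ × ℝ} (hd : det2 u v ≠ 0) :
    Function.Injective (linComb u v) :=
  ((Module.End.isUnit_iff _).1 <| (LinearMap.isUnit_iff_isUnit_det _).2 <|
    ((det_linComb u v).symm ▸ hd.isUnit : IsUnit (linComb u v).det)).injective

lemma setIntegral_tri_eq (z₀ u v : ℝ × ℝ) (hd : det2 u v ≠ 0) (g : ℝ × ℝ → ℝ) :
    ∫ x in tri z₀ (z₀ + u) (z₀ + v), g x =
      |det2 u v| * ∫ p in stdTri, g (z₀ + linComb u v p) := by
  let φ : ℝ × ℝ →ᵃ[ℝ] ℝ × ℝ :=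
    AffineMap.const ℝ _ z₀ + (linComb u v).toLinearMap.toAffineMap
  have hφ (p : ℝ × ℝ) : φ p = z₀ + linComb u v p := rfl
  have himage : φ '' stdTri = tri z₀ (z₀ + u) (z₀ + v) := by
    rw [← tri_unit_eq_stdTri, tri, tri, AffineMap.image_convexHull]
    simp [image_insert_eq, hφ]
  have hinj : Function.Injective φ := fun p q h => linComb_injective hd (add_left_cancel h)
  rw [← himage, integral_image_eq_integral_abs_det_fderiv_smul (f := φ) volume
    measurableSet_stdTri
    (fun p _ => ((linComb u v).hasFDerivAt.const_add z₀).hasFDerivWithinAt) hinj.injOn,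
    det_linComb, ← integral_const_mul]
  rfl

lemma AffineIndependent.linearIndependent_vsub_three {k V P : Type*} [Ring k]
    [AddCommGroup V] [Module k V] [AddTorsor V P] {p₀ p₁ p₂ : P}
    (h : AffineIndependent k ![p₀, p₁, p₂]) :
    LinearIndependent k ![p₁ -ᵥ p₀, p₂ -ᵥ p₀] := by
  rw [affineIndependent_iff_linearIndependent_vsub k _ (0 : Fin 3),
    ← linearIndependent_equiv (finSuccAboveEquiv (0 : Fin 3))] at h
  convert h using 1
  ext i
  fin_cases i <;> rfl

lemma det2_ne_zero_of_linearIndependent {u v : ℝ × ℝ} (h : LinearIndependent ℝ ![u, v]) :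
    det2 u v ≠ 0 := by
  intro hdet
  rw [LinearIndependent.pair_iff] at h
  have h₁ := h v.2 (-u.2) (by ext <;> simp [det2] at hdet ⊢ <;> linarith)
  have h₂ := h v.1 (-u.1) (by ext <;> simp [det2] at hdet ⊢ <;> linarith)
  exact one_ne_zero (h 1 0 (by ext <;> simp_all)).1

lemma det2_rotate (z₀ z₁ z₂ : ℝ × ℝ) :
    det2 (z₂ - z₁) (z₀ - z₁) = det2 (z₁ - z₀) (z₂ - z₀) := by
  simp only [det2, Prod.fst_sub, Prod.snd_sub]
  ring

lemma triArea_rotate (z₀ z₁ z₂ : ℝ × ℝ) : triArea z₁ z₂ z₀ = triArea z₀ z₁ z₂ := by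
  rw [triArea, triArea, det2_rotate]

lemma interp_add_linComb (z₀ u v : ℝ × ℝ) (hd : det2 u v ≠ 0) (f : ℝ × ℝ → ℝ)
    (p : ℝ × ℝ) :
    interp z₀ (z₀ + u) (z₀ + v) f (z₀ + linComb u v p) =
      (1 - p.1 - p.2) * f z₀ + p.1 * f (z₀ + u) + p.2 * f (z₀ + v) := by
  rw [interp, add_sub_cancel_left, add_sub_cancel_left, div_eq_iff hd]
  simp only [linComb_apply, det2, Prod.fst_add, Prod.snd_add, Prod.fst_sub, Prod.snd_sub,
    Prod.smul_fst, Prod.smul_snd, smul_eq_mul]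
  ring

section Quadratic

variable (a20 a11 a02 a10 a01 a00 : ℝ)

def quadForm (x : ℝ × ℝ) : ℝ := a20 * x.1 ^ 2 + 2 * a11 * x.1 * x.2 + a02 * x.2 ^ 2

def quadFun (x : ℝ × ℝ) : ℝ := quadForm a20 a11 a02 x + a10 * x.1 + a01 * x.2 + a00

local notation "Q" => quadForm a20 a11 a02
local notation "q" => quadFun a20 a11 a02 a10 a01 a00

variable {a20 a11 a02 a10 a01 a00}

lemma interp_sub_quadFun_add_linComb (z₀ u v : ℝ × ℝ) (hd : det2 u v ≠ 0) (p : ℝ × ℝ) :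
    interp z₀ (z₀ + u) (z₀ + v) q (z₀ + linComb u v p) - q (z₀ + linComb u v p) =
      Q u * (p.1 * (1 - p.1 - p.2)) + Q v * (p.2 * (1 - p.1 - p.2)) +
        Q (v - u) * (p.1 * p.2) := by
  rw [interp_add_linComb z₀ u v hd]
  simp only [quadFun, quadForm, linComb_apply, Prod.fst_add, Prod.snd_add, Prod.fst_sub,
    Prod.snd_sub, Prod.smul_fst, Prod.smul_snd, smul_eq_mul]
  ring

lemma interpErr_quadFun (hQ : ∀ w, 0 ≤ Q w) (z₀ z₁ z₂ : ℝ × ℝ)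
    (hd : det2 (z₁ - z₀) (z₂ - z₀) ≠ 0) :
    interpErr z₀ z₁ z₂ q =
      |det2 (z₁ - z₀) (z₂ - z₀)| / 24 * (Q (z₁ - z₀) + Q (z₂ - z₀) + Q (z₂ - z₁)) := by
  obtain ⟨u, rfl⟩ : ∃ u, z₁ = z₀ + u := ⟨z₁ - z₀, by abel⟩
  obtain ⟨v, rfl⟩ : ∃ v, z₂ = z₀ + v := ⟨z₂ - z₀, by abel⟩
  simp only [add_sub_cancel_left, add_sub_add_left_eq_sub] at hd ⊢
  have herr : EqOn (fun p => |q (z₀ + linComb u v p) -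
        interp z₀ (z₀ + u) (z₀ + v) q (z₀ + linComb u v p)|)
      (fun p => Q u * (p.1 * (1 - p.1 - p.2)) + Q v * (p.2 * (1 - p.1 - p.2)) +
        Q (v - u) * (p.1 * p.2)) stdTri := by
    rintro p ⟨h₁, h₂, h₃⟩
    have : 0 ≤ 1 - p.1 - p.2 := by linarith
    dsimp only
    rw [abs_sub_comm, interp_sub_quadFun_add_linComb z₀ u v hd,
      abs_of_nonneg (by have := hQ u; have := hQ v; have := hQ (v - u); positivity)]
  rw [interpErr, setIntegral_tri_eq z₀ u v hd,
    setIntegral_congr_fun measurableSet_stdTri herr, setIntegral_stdTri_edgeBubbles]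
  ring

lemma Ddec_quadFun (hQ : ∀ w, 0 ≤ Q w) (z₀ z₁ z₂ : ℝ × ℝ)
    (hd : det2 (z₁ - z₀) (z₂ - z₀) ≠ 0) :
    Ddec z₀ z₁ z₂ q = triArea z₀ z₁ z₂ / 12 * Q (z₁ - z₀) := by
  have hm₀ : det2 (midpoint ℝ z₀ z₁ - z₀) (z₂ - z₀) = det2 (z₁ - z₀) (z₂ - z₀) / 2 := by
    simp only [midpoint_eq_smul_add, det2, Prod.fst_sub, Prod.snd_sub, Prod.smul_fst,
      Prod.smul_snd, Prod.fst_add, Prod.snd_add, smul_eq_mul, invOf_eq_inv]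
    ring
  have hm₁ : det2 (z₁ - midpoint ℝ z₀ z₁) (z₂ - midpoint ℝ z₀ z₁) =
      det2 (z₁ - z₀) (z₂ - z₀) / 2 := by
    simp only [midpoint_eq_smul_add, det2, Prod.fst_sub, Prod.snd_sub, Prod.smul_fst,
      Prod.smul_snd, Prod.fst_add, Prod.snd_add, smul_eq_mul, invOf_eq_inv]
    ring
  have hd₂ := div_ne_zero hd two_ne_zero
  rw [Ddec, interpErr_quadFun hQ _ _ _ hd, interpErr_quadFun hQ _ _ _ (hm₀ ▸ hd₂),
    interpErr_quadFun hQ _ _ _ (hm₁ ▸ hd₂), hm₀, hm₁, abs_div, abs_two, triArea]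
  simp only [midpoint_eq_smul_add, quadForm, Prod.fst_sub, Prod.snd_sub, Prod.smul_fst,
    Prod.smul_snd, Prod.fst_add, Prod.snd_add, smul_eq_mul, invOf_eq_inv]
  ring

end Quadratic

/-- for a convex quadratic `q` with positive definite homogeneous
part `qh`, the `L¹` interpolation error decrease from bisecting the edge
`[z0,z1]` of a triangle `T` is `D_T(e,q) = (|T|/12)·qh(e)`; consequently an edge
maximizes `D_T(·,q)` among the three edges iff it maximizes `qh`, i.e. iff it is
longest in the `q`-metric. -/
theorem stmt6 (a20 a11 a02 a10 a01 a00 : ℝ) (q qh : ℝ × ℝ → ℝ)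
    (hq : q = fun p => a20 * p.1 ^ 2 + 2 * a11 * p.1 * p.2 + a02 * p.2 ^ 2 +
      a10 * p.1 + a01 * p.2 + a00)
    (hqh : qh = fun p => a20 * p.1 ^ 2 + 2 * a11 * p.1 * p.2 + a02 * p.2 ^ 2)
    (hpos : ∀ v : ℝ × ℝ, v ≠ 0 → 0 < qh v)
    (z0 z1 z2 : ℝ × ℝ) (hT : AffineIndependent ℝ ![z0, z1, z2]) :
    Ddec z0 z1 z2 q = triArea z0 z1 z2 / 12 * qh (z1 - z0) ∧
    (Ddec z0 z1 z2 q =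
        max (max (Ddec z0 z1 z2 q) (Ddec z1 z2 z0 q)) (Ddec z2 z0 z1 q) ↔
      qh (z1 - z0) = max (max (qh (z1 - z0)) (qh (z2 - z1))) (qh (z0 - z2))) := by
  obtain rfl : q = quadFun a20 a11 a02 a10 a01 a00 := hq
  obtain rfl : qh = quadForm a20 a11 a02 := hqh
  have hQ (w : ℝ × ℝ) : 0 ≤ quadForm a20 a11 a02 w := by
    rcases eq_or_ne w 0 with rfl | hw
    · simp [quadForm]
    · exact (hpos w hw).le
  have hd : det2 (z1 - z0) (z2 - z0) ≠ 0 :=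
    det2_ne_zero_of_linearIndependent hT.linearIndependent_vsub_three
  have hd₁ : det2 (z2 - z1) (z0 - z1) ≠ 0 := det2_rotate z0 z1 z2 ▸ hd
  have hd₂ : det2 (z0 - z2) (z1 - z2) ≠ 0 := det2_rotate z1 z2 z0 ▸ hd₁
  have harea : 0 < triArea z0 z1 z2 / 12 := by
    have := abs_pos.2 hd
    rw [triArea]
    positivity
  rw [Ddec_quadFun hQ _ _ _ hd, Ddec_quadFun hQ _ _ _ hd₁, Ddec_quadFun hQ _ _ _ hd₂,
    triArea_rotate z1 z2 z0, triArea_rotate z0 z1 z2, ← mul_max_of_nonneg _ _ harea.le,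
    ← mul_max_of_nonneg _ _ harea.le]
  exact ⟨rfl, mul_right_inj' harea.ne'⟩
end

section
/- Let q be a positive definite quadratic form on R^2 and T a triangle with edge vectors a, b, c satisfying a+b+c=0 and q(a) ≥ q(b) ≥ q(c). Define σ_q(T) := (q(b)+q(c))/(4·|T|·√(det q)). If T₁, T₂ are the two children obtained by bisecting the longest edge a at its midpoint, then max{σ_q(T₁), σ_q(T₂)} ≤ σ_q(T). -/
/-!
Bisecting the longest edge `a = -(b + c)` creates the median `(b - c) / 2`, and by the
parallelogram law `q(a/2) + q((b - c)/2) = (q(b) + q(c)) / 2`. Each child has `a/2` and the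
median among its edges, so the sum of its two smallest squared `q`-lengths is at most half that of
`T`, while its area is exactly half of `|T|`.
-/

open Matrix

theorem Matrix.toQuadraticForm'_apply {n R : Type*} [Fintype n] [DecidableEq n] [CommRing R]
    (M : Matrix n n R) (v : n → R) : M.toQuadraticForm' v = M *ᵥ v ⬝ᵥ v := by
  simp only [toQuadraticForm', LinearMap.BilinMap.toQuadraticMap_apply, toLinearMap₂'_apply',
    dotProduct_comm]

namespace QuadraticMap

theorem map_add_add_map_sub {R M N : Type*} [CommRing R] [AddCommGroup M] [Module R M]
    [AddCommGroup N] [Module R N] (Q : QuadraticMap R M N) (x y : M) :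
    Q (x + y) + Q (x - y) = 2 • Q x + 2 • Q y := by
  have h := Q.polar_neg_right x y
  simp only [polar, QuadraticMap.map_neg, ← sub_eq_add_neg, sub_sub, sub_eq_iff_eq_add] at h
  rw [h, two_nsmul, two_nsmul]
  abel

theorem map_half_smul_add_map_half_smul_sub_of_add_add_eq_zero {K M : Type*} [Field K]
    [AddCommGroup M] [Module K M] (Q : QuadraticForm K M) {a b c : M} (h : a + b + c = 0) :
    Q ((1 / 2 : K) • a) + Q ((1 / 2 : K) • (b - c)) = (Q b + Q c) / 2 := by
  have ha : a = -(b + c) := eq_neg_of_add_eq_zero_left ((add_assoc a b c).symm.trans h)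
  rw [ha, QuadraticMap.map_smul, QuadraticMap.map_smul, QuadraticMap.map_neg, ← smul_add,
    map_add_add_map_sub, nsmul_eq_mul, nsmul_eq_mul, Nat.cast_ofNat, smul_eq_mul]
  have hquarter : (2⁻¹ * 2⁻¹ * 2 : K) = 2⁻¹ := by simpa using mul_self_mul_inv (2⁻¹ : K)
  linear_combination (Q b + Q c) * hquarter

end QuadraticMap

section SumOfTwoSmallest

variable {α : Type*} [AddCommGroup α] [LinearOrder α]

theorem add_add_sub_max_max_of_le {x y z : α} (hyx : y ≤ x) (hzy : z ≤ y) :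
    x + y + z - max (max x y) z = y + z := by
  rw [max_eq_left hyx, max_eq_left (hzy.trans hyx)]
  abel

theorem add_add_sub_max_max_le_add_right [IsOrderedAddMonoid α] (x y z : α) :
    x + y + z - max (max x y) z ≤ x + z := by
  rw [sub_le_iff_le_add, add_right_comm]
  gcongr
  exact le_max_of_le_left (le_max_right x y)

theorem add_add_sub_max_max_le_add [IsOrderedAddMonoid α] (x y z : α) :
    x + y + z - max (max x y) z ≤ x + y := by
  rw [sub_le_iff_le_add]
  gcongr
  exact le_max_right _ _

end SumOfTwoSmallest

theorem stmt7_general (Q : Matrix (Fin 2) (Fin 2) ℝ)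
    (a b c : Fin 2 → ℝ) (hsum : a + b + c = 0)
    (area : ℝ) (harea : 0 < area)
    (qv : (Fin 2 → ℝ) → ℝ) (hqv : qv = fun v => Q.mulVec v ⬝ᵥ v)
    (hab : qv b ≤ qv a) (hbc : qv c ≤ qv b)
    (sig : ℝ → (Fin 2 → ℝ) → (Fin 2 → ℝ) → (Fin 2 → ℝ) → ℝ)
    (hsig : sig = fun A e1 e2 e3 =>
      (qv e1 + qv e2 + qv e3 - max (max (qv e1) (qv e2)) (qv e3)) /
        (4 * A * Real.sqrt Q.det)) :
    max (sig (area / 2) ((1 / 2 : ℝ) • a) b ((1 / 2 : ℝ) • (c - b)))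
        (sig (area / 2) ((1 / 2 : ℝ) • a) ((1 / 2 : ℝ) • (b - c)) c) ≤
      sig area a b c := by
  obtain rfl : qv = Q.toQuadraticForm' := by
    ext v
    rw [hqv, toQuadraticForm'_apply]
  set q := Q.toQuadraticForm'
  have hmedian := q.map_half_smul_add_map_half_smul_sub_of_add_add_eq_zero hsum
  have hchild : ∀ e1 e2 e3, q e1 + q e2 + q e3 - max (max (q e1) (q e2)) (q e3) ≤
      q ((1 / 2 : ℝ) • a) + q ((1 / 2 : ℝ) • (b - c)) →
        sig (area / 2) e1 e2 e3 ≤ sig area a b c := by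
    intro e1 e2 e3 hle
    have hd : 0 ≤ 4 * area * Real.sqrt Q.det := mul_nonneg (by linarith) (Real.sqrt_nonneg _)
    simp only [hsig]
    rw [add_add_sub_max_max_of_le hab hbc, ← mul_div_mul_left _ _ (two_ne_zero' ℝ),
      show 2 * (4 * (area / 2) * Real.sqrt Q.det) = 4 * area * Real.sqrt Q.det by ring]
    exact div_le_div_of_nonneg_right (by linarith) hd
  refine max_le (hchild _ _ _ ?_) (hchild _ _ _ (add_add_sub_max_max_le_add _ _ _))
  rw [← neg_sub b c, smul_neg, QuadraticMap.map_neg]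
  exact add_add_sub_max_max_le_add_right _ _ _

/-- for a positive definite quadratic form `q(v) = ⟨Qv,v⟩` and a
triangle with edge vectors `a+b+c=0`, `q(a) ≥ q(b) ≥ q(c)`, bisecting the
longest edge `a` at its midpoint produces two children (with edge vectors
`{a/2, b, (c−b)/2}` and `{a/2, (b−c)/2, c}` and area `|T|/2`) whose
non-degeneracy measure `σ_q` does not exceed `σ_q(T)`.  Here `σ_q` of a
triangle of area `A` with edges `e1,e2,e3` is the sum of the two smallest of
`q(e1),q(e2),q(e3)` divided by `4A√(det Q)`. -/
theorem stmt7 (Q : Matrix (Fin 2) (Fin 2) ℝ) (hQ : Q.PosDef)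
    (a b c : Fin 2 → ℝ) (hsum : a + b + c = 0)
    (area : ℝ) (harea : 0 < area)
    (qv : (Fin 2 → ℝ) → ℝ) (hqv : qv = fun v => Q.mulVec v ⬝ᵥ v)
    (hab : qv b ≤ qv a) (hbc : qv c ≤ qv b)
    (sig : ℝ → (Fin 2 → ℝ) → (Fin 2 → ℝ) → (Fin 2 → ℝ) → ℝ)
    (hsig : sig = fun A e1 e2 e3 =>
      (qv e1 + qv e2 + qv e3 - max (max (qv e1) (qv e2)) (qv e3)) /
        (4 * A * Real.sqrt Q.det)) :
    max (sig (area / 2) ((1 / 2 : ℝ) • a) b ((1 / 2 : ℝ) • (c - b)))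
        (sig (area / 2) ((1 / 2 : ℝ) • a) ((1 / 2 : ℝ) • (b - c)) c) ≤
      sig area a b c :=
  stmt7_general Q a b c hsum area harea qv hqv hab hbc sig hsig
end

section
/- Let q be a positive definite quadratic form on R^2 and T a triangle with edges ordered so that q(a) ≥ q(b) ≥ q(c), where a+b+c=0. Let ψ_q(T) denote the child of the longest-edge (in q-metric) bisection of T which contains the shortest edge c. Then σ_q(ψ_q(T)) ≤ (5/8)·ρ_q(T). -/
/-!
The sum of the two `q`-shortest edges of a triangle is at most the sum of any two of its edges.
Two of the edges of `ψ_q(T)` are `c` and `a/2`, so `σ_q(ψ_q(T))` is bounded by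
`(q(c) + q(a)/4) / (2|T|√(det q)) ≤ (5/4) q(a) / (2|T|√(det q)) = (5/8) ρ_q(T)`,
as `q(a)` is the largest of `q(a), q(b), q(c)`.
-/

open Matrix

lemma add_add_sub_max_le_add {α : Type*} [AddCommGroup α] [LinearOrder α] [IsOrderedAddMonoid α]
    (x y z : α) : x + y + z - max (max x y) z ≤ x + y := by
  rw [sub_le_iff_le_add, add_le_add_iff_left]
  exact le_max_right _ _

lemma Matrix.mulVec_smul_dotProduct_smul {n R : Type*} [Fintype n] [CommRing R]
    (Q : Matrix n n R) (t : R) (v : n → R) :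
    Q *ᵥ (t • v) ⬝ᵥ (t • v) = t ^ 2 * (Q *ᵥ v ⬝ᵥ v) := by
  rw [mulVec_smul, smul_dotProduct, dotProduct_smul, smul_eq_mul, smul_eq_mul]
  ring

theorem stmt9_general (Q : Matrix (Fin 2) (Fin 2) ℝ)
    (a b c : Fin 2 → ℝ)
    (area : ℝ) (harea : 0 < area)
    (qv : (Fin 2 → ℝ) → ℝ) (hqv : qv = fun v => Q.mulVec v ⬝ᵥ v)
    (hab : qv b ≤ qv a) (hbc : qv c ≤ qv b)
    (sig : ℝ → (Fin 2 → ℝ) → (Fin 2 → ℝ) → (Fin 2 → ℝ) → ℝ)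
    (hsig : sig = fun A e1 e2 e3 =>
      (qv e1 + qv e2 + qv e3 - max (max (qv e1) (qv e2)) (qv e3)) /
        (4 * A * Real.sqrt Q.det))
    (ρ : ℝ) (hρ : ρ = max (max (qv a) (qv b)) (qv c) / (area * Real.sqrt Q.det)) :
    sig (area / 2) c ((1 / 2 : ℝ) • a) ((1 / 2 : ℝ) • (b - c)) ≤ 5 / 8 * ρ := by
  subst hsig hρ
  set s := Real.sqrt Q.det
  have hmax : max (max (qv a) (qv b)) (qv c) = qv a := by
    rw [max_eq_left hab, max_eq_left (hbc.trans hab)]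
  have hhalf : qv ((1 / 2 : ℝ) • a) = qv a / 4 := by
    simp only [hqv, mulVec_smul_dotProduct_smul]
    ring
  have hsum_two_shortest :
      qv c + qv ((1 / 2 : ℝ) • a) + qv ((1 / 2 : ℝ) • (b - c)) -
          max (max (qv c) (qv ((1 / 2 : ℝ) • a))) (qv ((1 / 2 : ℝ) • (b - c)))
        ≤ 5 / 4 * qv a := by
    refine (add_add_sub_max_le_add _ _ _).trans ?_
    linarith [hbc.trans hab]
  beta_reduce
  rw [hmax, show 4 * (area / 2) * s = 2 * (area * s) by ring,
    show 5 / 8 * (qv a / (area * s)) = 5 / 4 * qv a / (2 * (area * s)) by ring]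
  gcongr

/-- for a positive definite quadratic form `q(v) = ⟨Qv,v⟩` and a
triangle `T` with edges `a+b+c=0`, `q(a) ≥ q(b) ≥ q(c)`, the child
`ψ_q(T)` of the `q`-longest edge bisection containing the shortest edge `c`
(with edges `c, a/2, (b−c)/2` and area `|T|/2`) satisfies
`σ_q(ψ_q(T)) ≤ (5/8)·ρ_q(T)`. -/
theorem stmt9 (Q : Matrix (Fin 2) (Fin 2) ℝ) (hQ : Q.PosDef)
    (a b c : Fin 2 → ℝ) (hsum : a + b + c = 0)
    (area : ℝ) (harea : 0 < area)
    (qv : (Fin 2 → ℝ) → ℝ) (hqv : qv = fun v => Q.mulVec v ⬝ᵥ v)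
    (hab : qv b ≤ qv a) (hbc : qv c ≤ qv b)
    (sig : ℝ → (Fin 2 → ℝ) → (Fin 2 → ℝ) → (Fin 2 → ℝ) → ℝ)
    (hsig : sig = fun A e1 e2 e3 =>
      (qv e1 + qv e2 + qv e3 - max (max (qv e1) (qv e2)) (qv e3)) /
        (4 * A * Real.sqrt Q.det))
    (ρ : ℝ) (hρ : ρ = max (max (qv a) (qv b)) (qv c) / (area * Real.sqrt Q.det)) :
    sig (area / 2) c ((1 / 2 : ℝ) • a) ((1 / 2 : ℝ) • (b - c)) ≤ 5 / 8 * ρ :=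
  stmt9_general Q a b c area harea qv hqv hab hbc sig hsig ρ hρ
end

section
/- Let q(x,y) = x² + y² be the Euclidean quadratic form and T a triangle with edges |a| ≥ |b| ≥ |c| (a+b+c=0). Let ψ(T) be the child of the midpoint bisection of the longest edge a containing the shortest edge c. Then ρ(ψ(T)) ≤ (ρ(T)/2)·(1 + 16/ρ(T)²), where ρ(S) := (diam S)²/|S|. -/
/-!
The three edges `a/2`, `c`, `d = (b - c)/2` of `ψ(T)` all project onto the line `ℝ a` with
length at most `‖a‖/2`: for `a/2` trivially, and for `c` and `d` because `c + d = -a/2` while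
`⟪a, c⟫ ≤ 0` and `⟪a, d⟫ ≤ 0` (this is `‖b‖ ≤ ‖a‖`, resp. `‖c‖ ≤ ‖b‖`). Their distance from that
line is at most the height `h = 2|T|/‖a‖` of `T`. By Pythagoras every edge of `ψ(T)` has squared
length at most `(‖a‖/2)² + h²`, and dividing by `|T|/2` gives exactly `ρ/2 + 8/ρ`.
-/

open RealInnerProductSpace

section InnerProductSpace

variable {E : Type*} [NormedAddCommGroup E] [InnerProductSpace ℝ E]

theorem inner_nonpos_of_norm_add_le {a c : E} (h : ‖a + c‖ ≤ ‖a‖) : ⟪a, c⟫ ≤ 0 := by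
  have h2 := pow_le_pow_left₀ (norm_nonneg _) h 2
  rw [norm_add_sq_real] at h2
  nlinarith [sq_nonneg ‖c‖]

theorem abs_inner_le_of_add_eq_neg_half_smul {a v w : E} (hvw : v + w = -((1 / 2 : ℝ) • a))
    (hv : ⟪a, v⟫ ≤ 0) (hw : ⟪a, w⟫ ≤ 0) : |⟪a, v⟫| ≤ ‖a‖ ^ 2 / 2 := by
  have : ⟪a, v⟫ + ⟪a, w⟫ = -(‖a‖ ^ 2 / 2) := by
    rw [← inner_add_right, hvw, inner_neg_right, real_inner_smul_right, real_inner_self_eq_norm_sq]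
    ring
  rw [abs_of_nonpos hv]
  linarith

theorem inner_add_sub_nonneg_of_norm_le {b c : E} (h : ‖c‖ ≤ ‖b‖) : 0 ≤ ⟪b + c, b - c⟫ := by
  rw [inner_add_left, inner_sub_right, inner_sub_right, real_inner_self_eq_norm_sq,
    real_inner_self_eq_norm_sq, real_inner_comm b c]
  nlinarith [norm_nonneg c]

theorem abs_inner_le_of_longest_edge {a b c : E} (hsum : a + b + c = 0) (hab : ‖b‖ ≤ ‖a‖)
    (hbc : ‖c‖ ≤ ‖b‖) :
    |⟪a, c⟫| ≤ ‖a‖ ^ 2 / 2 ∧ |⟪a, (1 / 2 : ℝ) • (b - c)⟫| ≤ ‖a‖ ^ 2 / 2 := by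
  obtain rfl : a = -(b + c) := by linear_combination (norm := module) hsum
  have hc : ⟪-(b + c), c⟫ ≤ 0 := by
    apply inner_nonpos_of_norm_add_le
    rwa [show -(b + c) + c = -b by abel, norm_neg]
  have hd : ⟪-(b + c), (1 / 2 : ℝ) • (b - c)⟫ ≤ 0 := by
    rw [inner_neg_left, real_inner_smul_right]
    nlinarith [inner_add_sub_nonneg_of_norm_le hbc]
  have hcd : c + (1 / 2 : ℝ) • (b - c) = -((1 / 2 : ℝ) • -(b + c)) := by module
  exact ⟨abs_inner_le_of_add_eq_neg_half_smul hcd hc hd,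
    abs_inner_le_of_add_eq_neg_half_smul (by rw [add_comm, hcd]) hd hc⟩

end InnerProductSpace

/-- `cross a v / ‖a‖` is the signed distance of `v` from the line `ℝ a`. -/
def cross (u v : EuclideanSpace ℝ (Fin 2)) : ℝ := u 0 * v 1 - u 1 * v 0

theorem inner_sq_add_cross_sq (u v : EuclideanSpace ℝ (Fin 2)) :
    ⟪u, v⟫ ^ 2 + cross u v ^ 2 = ‖u‖ ^ 2 * ‖v‖ ^ 2 := by
  simp only [EuclideanSpace.real_norm_sq_eq, EuclideanSpace.inner_eq_star_dotProduct, cross]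
  simp only [dotProduct, Pi.star_apply, star_trivial, Fin.sum_univ_two]
  ring

theorem norm_sq_eq_inner_div_sq_add_cross_div_sq {a : EuclideanSpace ℝ (Fin 2)} (ha : a ≠ 0)
    (v : EuclideanSpace ℝ (Fin 2)) :
    ‖v‖ ^ 2 = (⟪a, v⟫ / ‖a‖) ^ 2 + (cross a v / ‖a‖) ^ 2 := by
  have : ‖a‖ ≠ 0 := norm_ne_zero_iff.mpr ha
  field_simp
  linear_combination -(inner_sq_add_cross_sq a v)

theorem norm_sq_le_of_abs_inner_le {a v : EuclideanSpace ℝ (Fin 2)} (ha : a ≠ 0)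
    (h : |⟪a, v⟫| ≤ ‖a‖ ^ 2 / 2) {w : ℝ} (hw : |cross a v| ≤ |w|) :
    ‖v‖ ^ 2 ≤ (‖a‖ / 2) ^ 2 + (w / ‖a‖) ^ 2 := by
  have ha' : 0 < ‖a‖ := norm_pos_iff.mpr ha
  have hproj : |⟪a, v⟫ / ‖a‖| ≤ |‖a‖ / 2| := by
    rw [abs_div, abs_norm, abs_of_pos (half_pos ha'), div_le_iff₀ ha']
    linarith
  have hwidth : |cross a v / ‖a‖| ≤ |w / ‖a‖| := by
    rw [abs_div, abs_div]
    gcongr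
  rw [norm_sq_eq_inner_div_sq_add_cross_div_sq ha v]
  exact add_le_add (sq_le_sq.mpr hproj) (sq_le_sq.mpr hwidth)

theorem sq_max_edge_bisection_child_le {a b c : EuclideanSpace ℝ (Fin 2)} (hsum : a + b + c = 0)
    (hab : ‖b‖ ≤ ‖a‖) (hbc : ‖c‖ ≤ ‖b‖) (ha : a ≠ 0) :
    max (max ‖(1 / 2 : ℝ) • a‖ ‖c‖) ‖(1 / 2 : ℝ) • (b - c)‖ ^ 2 ≤
      (‖a‖ / 2) ^ 2 + (cross a b / ‖a‖) ^ 2 := by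
  obtain ⟨hc, hd⟩ := abs_inner_le_of_longest_edge hsum hab hbc
  have ha2 : |⟪a, (1 / 2 : ℝ) • a⟫| ≤ ‖a‖ ^ 2 / 2 := by
    rw [real_inner_smul_right, real_inner_self_eq_norm_sq, abs_of_nonneg (by positivity)]
    linarith
  obtain rfl : b = -a - c := by linear_combination (norm := module) hsum
  have h₁ : cross a ((1 / 2 : ℝ) • a) = 0 := by
    simp only [cross, PiLp.smul_apply, smul_eq_mul]; ring
  have h₂ : cross a c = -cross a (-a - c) := by
    simp only [cross, PiLp.sub_apply, PiLp.neg_apply]; ring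
  have h₃ : cross a ((1 / 2 : ℝ) • (-a - c - c)) = cross a (-a - c) := by
    simp only [cross, PiLp.smul_apply, PiLp.sub_apply, PiLp.neg_apply, smul_eq_mul]; ring
  refine max_rec' (· ^ 2 ≤ _) (max_rec' (· ^ 2 ≤ _) ?_ ?_) ?_
  · exact norm_sq_le_of_abs_inner_le ha ha2 (by rw [h₁, abs_zero]; exact abs_nonneg _)
  · exact norm_sq_le_of_abs_inner_le ha hc (by rw [h₂, abs_neg])
  · exact norm_sq_le_of_abs_inner_le ha hd (by rw [h₃])

/-- Euclidean case `q(x,y) = x²+y²`.  For a triangle with edge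
vectors `a+b+c = 0`, `‖a‖ ≥ ‖b‖ ≥ ‖c‖` and area `|a₀b₁ − a₁b₀|/2 > 0`, the
child `ψ(T)` of the longest-edge midpoint bisection containing the shortest
edge `c` (edges `a/2, c, (b−c)/2`, area `|T|/2`) satisfies
`ρ(ψ(T)) ≤ (ρ(T)/2)·(1 + 16/ρ(T)²)` where `ρ(S) = (diam S)²/|S|`. -/
theorem stmt10 (a b c : EuclideanSpace ℝ (Fin 2)) (hsum : a + b + c = 0)
    (hab : ‖b‖ ≤ ‖a‖) (hbc : ‖c‖ ≤ ‖b‖)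
    (area : ℝ) (harea : area = |a 0 * b 1 - a 1 * b 0| / 2) (hpos : 0 < area) :
    max (max ‖(1 / 2 : ℝ) • a‖ ‖c‖) ‖(1 / 2 : ℝ) • (b - c)‖ ^ 2 / (area / 2) ≤
      ‖a‖ ^ 2 / area / 2 * (1 + 16 / (‖a‖ ^ 2 / area) ^ 2) := by
  have hcross : |cross a b| = 2 * area := by rw [harea, cross]; ring
  have ha : a ≠ 0 := by
    rintro rfl
    have : cross 0 b = 0 := by simp [cross]
    rw [this, abs_zero] at hcross
    linarith
  have hna : ‖a‖ ≠ 0 := norm_ne_zero_iff.mpr ha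
  have hwidth : (cross a b / ‖a‖) ^ 2 = (2 * area / ‖a‖) ^ 2 := by
    rw [div_pow, div_pow, ← sq_abs, hcross]
  calc _ ≤ ((‖a‖ / 2) ^ 2 + (2 * area / ‖a‖) ^ 2) / (area / 2) := by
        rw [← hwidth]; gcongr; exact sq_max_edge_bisection_child_le hsum hab hbc ha
    _ = _ := by field_simp; ring
end

section
/- Let T be a triangle with edges |a| ≥ |b| ≥ |c| in the Euclidean norm and a+b+c=0, and let ψ(T) be the child of the longest-edge bisection containing c. If ρ(T) ≥ ρ(ψ(T)) and ρ(ψ(T)) ≥ 4, then ρ(T) ≥ ρ(ψ(T)) + √(ρ(ψ(T))² − 16), where ρ(S) := (diam S)²/|S|. -/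
/-!
Every edge `v` of `ψ(T)` (namely `a/2`, `c = -(b + a)` and `(b - c)/2 = b + a/2`) has its
component along `a` of length at most `|a|/2`: the ordering `|a| ≥ |b| ≥ |c|` forces
`-|a|² ≤ ⟪a, b⟫ ≤ -|a|²/2`. Its component across `a` is at most the height of `T`, because the
Gram determinant `|a|²|v|² - ⟪a, v⟫²` does not change when a multiple of `a` is added to `v`.
Hence `|a|² diam(ψ(T))² ≤ |a|⁴/4 + 4|T|²`, i.e. `2 ρ(T) ρ(ψ(T)) ≤ ρ(T)² + 16`, which is the
quadratic inequality `(ρ(T) - ρ(ψ(T)))² ≥ ρ(ψ(T))² - 16`.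
-/

open RealInnerProductSpace

section InnerProductSpace

variable {E : Type*} [NormedAddCommGroup E] [InnerProductSpace ℝ E]

theorem inner_bounds_of_norm_le_of_norm_add_le {a b : E} (hab : ‖b‖ ≤ ‖a‖)
    (hbc : ‖a + b‖ ≤ ‖b‖) : -‖a‖ ^ 2 ≤ ⟪a, b⟫ ∧ ⟪a, b⟫ ≤ -‖a‖ ^ 2 / 2 := by
  constructor
  · have := neg_abs_le ⟪a, b⟫
    nlinarith [abs_real_inner_le_norm a b, norm_nonneg a, norm_nonneg b]
  · have h := pow_le_pow_left₀ (norm_nonneg _) hbc 2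
    rw [norm_add_sq_real] at h
    linarith

theorem sq_norm_mul_sq_norm_add_smul_le {a b : E} (t : ℝ)
    (h : |⟪a, b + t • a⟫| ≤ ‖a‖ ^ 2 / 2) :
    ‖a‖ ^ 2 * ‖b + t • a‖ ^ 2 ≤ ‖a‖ ^ 4 / 4 + (‖a‖ ^ 2 * ‖b‖ ^ 2 - ⟪a, b⟫ ^ 2) := by
  have hsq : ⟪a, b + t • a⟫ ^ 2 ≤ (‖a‖ ^ 2 / 2) ^ 2 := sq_le_sq' (abs_le.mp h).1 (abs_le.mp h).2
  have gram_invariant : ‖a‖ ^ 2 * ‖b + t • a‖ ^ 2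
      = ⟪a, b + t • a⟫ ^ 2 + (‖a‖ ^ 2 * ‖b‖ ^ 2 - ⟪a, b⟫ ^ 2) := by
    rw [norm_add_sq_real, inner_add_right, inner_smul_right, inner_smul_right, norm_smul,
      real_inner_self_eq_norm_sq, real_inner_comm, Real.norm_eq_abs, mul_pow, sq_abs]
    ring
  nlinarith

theorem sq_norm_mul_sq_max_child_edge_le {a b c : E} (hsum : a + b + c = 0)
    (hab : ‖b‖ ≤ ‖a‖) (hbc : ‖c‖ ≤ ‖b‖) :
    ‖a‖ ^ 2 * max (max ‖(1 / 2 : ℝ) • a‖ ‖c‖) ‖(1 / 2 : ℝ) • (b - c)‖ ^ 2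
      ≤ ‖a‖ ^ 4 / 4 + (‖a‖ ^ 2 * ‖b‖ ^ 2 - ⟪a, b⟫ ^ 2) := by
  have hc : c = -(b + a) := by rw [add_comm b]; exact eq_neg_of_add_eq_zero_right hsum
  have hshort_eq : ‖c‖ = ‖b + (1 : ℝ) • a‖ := by rw [hc, norm_neg, one_smul]
  have hmid : (1 / 2 : ℝ) • (b - c) = b + (1 / 2 : ℝ) • a := by rw [hc]; module
  obtain ⟨hlo, hhi⟩ :=
    inner_bounds_of_norm_le_of_norm_add_le hab (by rwa [hc, norm_neg, add_comm] at hbc)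
  have hgram_nonneg : 0 ≤ ‖a‖ ^ 2 * ‖b‖ ^ 2 - ⟪a, b⟫ ^ 2 := by
    nlinarith [abs_real_inner_le_norm a b, sq_abs ⟪a, b⟫, abs_nonneg ⟪a, b⟫]
  have hhalf : ‖a‖ ^ 2 * ‖(1 / 2 : ℝ) • a‖ ^ 2 = ‖a‖ ^ 4 / 4 := by
    rw [norm_smul, Real.norm_eq_abs, abs_of_pos (by norm_num : (0 : ℝ) < 1 / 2)]; ring
  have hshort := sq_norm_mul_sq_norm_add_smul_le (a := a) (b := b) 1 (by
    rw [inner_add_right, inner_smul_right, real_inner_self_eq_norm_sq, abs_le]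
    constructor <;> linarith)
  have hmedian := sq_norm_mul_sq_norm_add_smul_le (a := a) (b := b) (1 / 2) (by
    rw [inner_add_right, inner_smul_right, real_inner_self_eq_norm_sq, abs_le]
    constructor <;> linarith)
  rw [hmid, hshort_eq]
  rcases max_choice (max ‖(1 / 2 : ℝ) • a‖ ‖b + (1 : ℝ) • a‖) ‖b + (1 / 2 : ℝ) • a‖ with h | h <;>
    rw [h]
  · rcases max_choice ‖(1 / 2 : ℝ) • a‖ ‖b + (1 : ℝ) • a‖ with h' | h' <;> rw [h'] <;> linarith
  · exact hmedian

end InnerProductSpace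

theorem EuclideanSpace.sq_norm_mul_sq_norm_sub_sq_inner_fin_two
    (a b : EuclideanSpace ℝ (Fin 2)) :
    ‖a‖ ^ 2 * ‖b‖ ^ 2 - ⟪a, b⟫ ^ 2 = (a 0 * b 1 - a 1 * b 0) ^ 2 := by
  simp only [EuclideanSpace.norm_sq_eq, PiLp.inner_apply, Fin.sum_univ_two, Real.norm_eq_abs,
    sq_abs, RCLike.inner_apply, conj_trivial]
  ring

theorem two_mul_mul_le_sq_add_sixteen {A M S : ℝ} (hS : 0 < S)
    (h : A * M ≤ A ^ 2 / 4 + 4 * S ^ 2) :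
    2 * (M / (S / 2)) * (A / S) ≤ (A / S) ^ 2 + 16 := by
  rw [div_pow, div_add' _ _ _ (by positivity), le_div_iff₀ (by positivity)]
  field_simp
  nlinarith

theorem add_sqrt_sq_sub_le {p r k : ℝ} (hpr : p ≤ r) (h : 2 * p * r ≤ r ^ 2 + k) :
    p + √(p ^ 2 - k) ≤ r := by
  have : √(p ^ 2 - k) ≤ r - p := (Real.sqrt_le_left (by linarith)).mpr (by nlinarith)
  linarith

theorem stmt11_general (a b c : EuclideanSpace ℝ (Fin 2)) (hsum : a + b + c = 0)
    (hab : ‖b‖ ≤ ‖a‖) (hbc : ‖c‖ ≤ ‖b‖)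
    (area : ℝ) (harea : area = |a 0 * b 1 - a 1 * b 0| / 2) (hpos : 0 < area)
    (ρT ρψ : ℝ) (hρT : ρT = ‖a‖ ^ 2 / area)
    (hρψ : ρψ =
      max (max ‖(1 / 2 : ℝ) • a‖ ‖c‖) ‖(1 / 2 : ℝ) • (b - c)‖ ^ 2 / (area / 2))
    (hmon : ρψ ≤ ρT) :
    ρψ + Real.sqrt (ρψ ^ 2 - 16) ≤ ρT := by
  have hgram : ‖a‖ ^ 2 * ‖b‖ ^ 2 - ⟪a, b⟫ ^ 2 = 4 * area ^ 2 := by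
    rw [EuclideanSpace.sq_norm_mul_sq_norm_sub_sq_inner_fin_two, harea, div_pow, sq_abs]
    ring
  have hdiam := sq_norm_mul_sq_max_child_edge_le hsum hab hbc
  rw [hgram, show ‖a‖ ^ 4 = (‖a‖ ^ 2) ^ 2 by ring] at hdiam
  refine add_sqrt_sq_sub_le hmon ?_
  rw [hρT, hρψ]
  exact two_mul_mul_le_sq_add_sixteen hpos hdiam

/-- with the notation of the Euclidean longest-edge bisection
(`ρ(S) = (diam S)²/|S|`, `ψ(T)` the child containing the shortest edge `c`),
if `ρ(T) ≥ ρ(ψ(T))` and `ρ(ψ(T)) ≥ 4` then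
`ρ(T) ≥ ρ(ψ(T)) + √(ρ(ψ(T))² − 16)`. -/
theorem stmt11 (a b c : EuclideanSpace ℝ (Fin 2)) (hsum : a + b + c = 0)
    (hab : ‖b‖ ≤ ‖a‖) (hbc : ‖c‖ ≤ ‖b‖)
    (area : ℝ) (harea : area = |a 0 * b 1 - a 1 * b 0| / 2) (hpos : 0 < area)
    (ρT ρψ : ℝ) (hρT : ρT = ‖a‖ ^ 2 / area)
    (hρψ : ρψ =
      max (max ‖(1 / 2 : ℝ) • a‖ ‖c‖) ‖(1 / 2 : ℝ) • (b - c)‖ ^ 2 / (area / 2))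
    (hmon : ρψ ≤ ρT) (h4 : 4 ≤ ρψ) :
    ρψ + Real.sqrt (ρψ ^ 2 - 16) ≤ ρT :=
  stmt11_general a b c hsum hab hbc area harea hpos ρT ρψ hρT hρψ hmon
end
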